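/- arXiv:1507.05568 — 2 statements merged into one kernel-verified Lean document; each statement's English description precedes it below -/
import Mathlib

section
/- Assume α < 0 < β, so that l1 < l2. Define b(t) = −a(t)/(t + l2/(l1−l2)) for t ∈ [0,1). Then for every t ∈ [0,1): a_min·(l2−l1)/l2 ≤ a(t)·(l2−l1)/l2 ≤ b(t) ≤ a(t)·(l2−l1)/l1 ≤ a_max·(l2−l1)/l1, where a_min and a_max denote the minimum and maximum of a over one period. In particular b is bounded above and below by positive constants on [0,1). -/
/-! With `d(t) = l2 - t (l2 - l1)`, one has `b(t) = a(t) (l2 - l1) / d(t)`, and `d` decreases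
from `l2` to `l1` on `[0, 1]`; so the middle inequalities hold for any positive `a`, and the outer
ones are the extreme values of the continuous function `a` on the compact interval `[0, 1]`. -/

open Set

lemma one_add_div_one_sub_pos {x : ℝ} (h₁ : -1 < x) (h₂ : x < 1) : 0 < (1 + x) / (1 - x) :=
  div_pos (by linarith) (by linarith)

lemma one_add_div_one_sub_lt_one {x : ℝ} (hx : x < 0) : (1 + x) / (1 - x) < 1 := by
  rw [div_lt_one (by linarith)]
  linarith

lemma one_lt_one_add_div_one_sub {x : ℝ} (h₀ : 0 < x) (h₁ : x < 1) : 1 < (1 + x) / (1 - x) := by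
  rw [lt_div_iff₀ (by linarith)]
  linarith

lemma IsCompact.sInf_image_pos {X : Type*} [TopologicalSpace X] {K : Set X} {f : X → ℝ}
    (hK : IsCompact K) (hne : K.Nonempty) (hf : ContinuousOn f K) (hpos : ∀ x ∈ K, 0 < f x) :
    0 < sInf (f '' K) := by
  obtain ⟨x, hx, hfx⟩ := (hK.image_of_continuousOn hf).sInf_mem (hne.image f)
  exact hfx ▸ hpos x hx

section Weight

variable {l1 l2 A t : ℝ}

lemma neg_div_add_div_sub_eq (h : l1 ≠ l2) :
    -A / (t + l2 / (l1 - l2)) = A * (l2 - l1) / (l2 - t * (l2 - l1)) := by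
  rw [add_div' _ _ _ (sub_ne_zero.2 h), div_div_eq_mul_div]
  congr 1 <;> ring

lemma mul_sub_div_le_neg_div_add_div (hl1 : 0 < l1) (hl12 : l1 < l2) (hA : 0 ≤ A)
    (ht : t ∈ Icc (0 : ℝ) 1) :
    A * (l2 - l1) / l2 ≤ -A / (t + l2 / (l1 - l2)) := by
  rw [neg_div_add_div_sub_eq hl12.ne]
  apply div_le_div_of_nonneg_left (mul_nonneg hA (sub_nonneg.2 hl12.le)) <;>
    nlinarith [ht.1, ht.2]

lemma neg_div_add_div_le_mul_sub_div (hl1 : 0 < l1) (hl12 : l1 < l2) (hA : 0 ≤ A)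
    (ht : t ∈ Icc (0 : ℝ) 1) :
    -A / (t + l2 / (l1 - l2)) ≤ A * (l2 - l1) / l1 := by
  rw [neg_div_add_div_sub_eq hl12.ne]
  apply div_le_div_of_nonneg_left (mul_nonneg hA (sub_nonneg.2 hl12.le)) hl1
  nlinarith [ht.1, ht.2]

end Weight

theorem stmt5_general (α β : ℝ) (hα : α ∈ Set.Ioo (-1 : ℝ) 1) (hβ : β ∈ Set.Ioo (-1 : ℝ) 1)
    (hsign : α < 0 ∧ 0 < β)
    (l1 l2 : ℝ) (hl1 : l1 = (1 + α) / (1 - α)) (hl2 : l2 = (1 + β) / (1 - β))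
    (a : ℝ → ℝ) (ha_cont : Continuous a)
    (ha_pos : ∀ t, 0 < a t)
    (b : ℝ → ℝ) (hb : ∀ t, b t = -a t / (t + l2 / (l1 - l2)))
    (amin amax : ℝ) (hamin : amin = sInf (a '' Set.Icc (0 : ℝ) 1))
    (hamax : amax = sSup (a '' Set.Icc (0 : ℝ) 1)) :
    l1 < l2 ∧
    (∀ t ∈ Set.Ico (0 : ℝ) 1,
      amin * (l2 - l1) / l2 ≤ a t * (l2 - l1) / l2 ∧
      a t * (l2 - l1) / l2 ≤ b t ∧
      b t ≤ a t * (l2 - l1) / l1 ∧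
      a t * (l2 - l1) / l1 ≤ amax * (l2 - l1) / l1) ∧
    (∃ c C : ℝ, 0 < c ∧ 0 < C ∧ ∀ t ∈ Set.Ico (0 : ℝ) 1, c ≤ b t ∧ b t ≤ C) := by
  have hl1_pos : 0 < l1 := hl1 ▸ one_add_div_one_sub_pos hα.1 hα.2
  have hl12 : l1 < l2 := (hl1 ▸ one_add_div_one_sub_lt_one hsign.1).trans
    (hl2 ▸ one_lt_one_add_div_one_sub hsign.2 hβ.2)
  have hl2_pos : 0 < l2 := hl1_pos.trans hl12
  have hcont : ContinuousOn a (Icc 0 1) := ha_cont.continuousOn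
  have hamin_pos : 0 < amin := hamin ▸ isCompact_Icc.sInf_image_pos
    (nonempty_Icc.2 zero_le_one) hcont fun x _ ↦ ha_pos x
  have hbounds : ∀ t ∈ Ico (0 : ℝ) 1,
      amin * (l2 - l1) / l2 ≤ a t * (l2 - l1) / l2 ∧
      a t * (l2 - l1) / l2 ≤ b t ∧
      b t ≤ a t * (l2 - l1) / l1 ∧
      a t * (l2 - l1) / l1 ≤ amax * (l2 - l1) / l1 := by
    intro t ht
    have ht' : t ∈ Icc (0 : ℝ) 1 := Ico_subset_Icc_self ht
    rw [hb]
    refine ⟨?_, mul_sub_div_le_neg_div_add_div hl1_pos hl12 (ha_pos t).le ht',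
      neg_div_add_div_le_mul_sub_div hl1_pos hl12 (ha_pos t).le ht', ?_⟩
    · gcongr
      rw [hamin]
      exact hcont.sInf_image_Icc_le ht'
    · gcongr
      rw [hamax]
      exact hcont.le_sSup_image_Icc ht'
  have hc : 0 < amin * (l2 - l1) / l2 :=
    div_pos (mul_pos hamin_pos (sub_pos.2 hl12)) hl2_pos
  refine ⟨hl12, hbounds, amin * (l2 - l1) / l2, amax * (l2 - l1) / l1, hc, ?_, fun t ht ↦ ?_⟩
  · obtain ⟨h₁, h₂, h₃, h₄⟩ := hbounds 0 (left_mem_Ico.2 zero_lt_one)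
    linarith
  · obtain ⟨h₁, h₂, h₃, h₄⟩ := hbounds t ht
    exact ⟨h₁.trans h₂, h₃.trans h₄⟩

/-- with `α < 0 < β` (so `l1 < l2`) and `b(t) = -a(t)/(t + l2/(l1-l2))`,
for every `t ∈ [0,1)`:
`a_min(l2-l1)/l2 ≤ a(t)(l2-l1)/l2 ≤ b(t) ≤ a(t)(l2-l1)/l1 ≤ a_max(l2-l1)/l1`,
where `a_min`, `a_max` are the minimum and maximum of `a` over one period;
in particular `b` is bounded above and below by positive constants on `[0,1)`. -/
theorem stmt5 (α β : ℝ) (hα : α ∈ Set.Ioo (-1 : ℝ) 1) (hβ : β ∈ Set.Ioo (-1 : ℝ) 1)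
    (hαβ : α ≠ β) (hsign : α < 0 ∧ 0 < β)
    (l1 l2 : ℝ) (hl1 : l1 = (1 + α) / (1 - α)) (hl2 : l2 = (1 + β) / (1 - β))
    (a : ℝ → ℝ) (ha_cont : Continuous a) (ha_per : Function.Periodic a 1)
    (ha_pos : ∀ t, 0 < a t)
    (ha1 : ∀ t : ℝ, α * (1 + β) / (2 * (α - β)) ≤ t →
      t ≤ (α * (1 + β) - 2 * β) / (2 * (α - β)) →
      a t = α * t + α * (1 - α) * (1 + β) / (2 * (α - β)))
    (ha2 : ∀ t : ℝ, (α * (1 + β) - 2 * β) / (2 * (α - β)) ≤ t →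
      t ≤ (α * (3 + β) - 2 * β) / (2 * (α - β)) →
      a t = β * t - β + α * (1 - β ^ 2) / (2 * (α - β)))
    (b : ℝ → ℝ) (hb : ∀ t, b t = -a t / (t + l2 / (l1 - l2)))
    (amin amax : ℝ) (hamin : amin = sInf (a '' Set.Icc (0 : ℝ) 1))
    (hamax : amax = sSup (a '' Set.Icc (0 : ℝ) 1)) :
    l1 < l2 ∧
    (∀ t ∈ Set.Ico (0 : ℝ) 1,
      amin * (l2 - l1) / l2 ≤ a t * (l2 - l1) / l2 ∧
      a t * (l2 - l1) / l2 ≤ b t ∧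
      b t ≤ a t * (l2 - l1) / l1 ∧
      a t * (l2 - l1) / l1 ≤ amax * (l2 - l1) / l1) ∧
    (∃ c C : ℝ, 0 < c ∧ 0 < C ∧ ∀ t ∈ Set.Ico (0 : ℝ) 1, c ≤ b t ∧ b t ≤ C) :=
  stmt5_general α β hα hβ hsign l1 l2 hl1 hl2 a ha_cont ha_pos b hb amin amax hamin hamax
end

section
/- Let H : ℝ → ℝ be continuously differentiable with λ1 ≤ H′(s) ≤ λ2 for all s ∈ ℝ, where 0 < λ1 ≤ λ2, and let V : ℝ² → ℝ be continuously differentiable. Define u(x,t) = V(Φ(x,t)). Then for every (x,t) ∈ ℝ²: λ1²·((∂V/∂ξ)² + (∂V/∂τ)²)(Φ(x,t)) ≤ (∂u/∂t)²(x,t) + (∂u/∂x)²(x,t) ≤ λ2²·((∂V/∂ξ)² + (∂V/∂τ)²)(Φ(x,t)). Consequently the energy densities of u and of V∘Φ are comparable with constants depending only on λ1 and λ2. -/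
/-!
With `a = H'(x+t)` and `b = H'(-x+t)`, the Jacobian of `Φ` is `½ [[a+b, a-b], [a-b, a+b]]`:
symmetric, with eigenvectors `(1, 1)`, `(1, -1)` and eigenvalues `a`, `b`. By the chain rule
`u_t² + u_x² = (a² (V_ξ + V_τ)² + b² (V_ξ - V_τ)²) / 2`, while
`V_ξ² + V_τ² = ((V_ξ + V_τ)² + (V_ξ - V_τ)²) / 2`, and `λ₁² ≤ a², b² ≤ λ₂²`.
-/

/-- Partial derivative in the first variable of a function on `ℝ²`. -/
noncomputable def pdx (V : ℝ × ℝ → ℝ) (q : ℝ × ℝ) : ℝ :=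
  deriv (fun s => V (s, q.2)) q.1

/-- Partial derivative in the second variable of a function on `ℝ²`. -/
noncomputable def pdt (V : ℝ × ℝ → ℝ) (q : ℝ × ℝ) : ℝ :=
  deriv (fun s => V (q.1, s)) q.2

/-- The domain transformation `Φ(x,t) = ((H(x+t) - H(-x+t))/2, (H(x+t) + H(-x+t))/2)`. -/
noncomputable def Phi (H : ℝ → ℝ) (q : ℝ × ℝ) : ℝ × ℝ :=
  ((H (q.1 + q.2) - H (-q.1 + q.2)) / 2, (H (q.1 + q.2) + H (-q.1 + q.2)) / 2)

section ChainRule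

variable {V : ℝ × ℝ → ℝ} {q : ℝ × ℝ}

lemma pdx_eq_fderiv (hV : DifferentiableAt ℝ V q) : pdx V q = fderiv ℝ V q (1, 0) :=
  (hV.hasFDerivAt.comp_hasDerivAt q.1 ((hasDerivAt_id q.1).prodMk (hasDerivAt_const _ _))).deriv

lemma pdt_eq_fderiv (hV : DifferentiableAt ℝ V q) : pdt V q = fderiv ℝ V q (0, 1) :=
  (hV.hasFDerivAt.comp_hasDerivAt q.2 ((hasDerivAt_const _ _).prodMk (hasDerivAt_id q.2))).deriv

lemma HasDerivAt.comp_pdx_pdt {γ : ℝ → ℝ × ℝ} {γ' : ℝ × ℝ} {s : ℝ}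
    (hγ : HasDerivAt γ γ' s) (hV : DifferentiableAt ℝ V (γ s)) :
    HasDerivAt (fun r => V (γ r)) (γ'.1 * pdx V (γ s) + γ'.2 * pdt V (γ s)) s := by
  refine (hV.hasFDerivAt.comp_hasDerivAt s hγ).congr_deriv ?_
  have hbasis : γ' = γ'.1 • ((1 : ℝ), (0 : ℝ)) + γ'.2 • ((0 : ℝ), (1 : ℝ)) := by
    ext <;> simp
  conv_lhs => rw [hbasis, map_add, map_smul, map_smul, smul_eq_mul, smul_eq_mul]
  rw [pdx_eq_fderiv hV, pdt_eq_fderiv hV]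

end ChainRule

section PhiDerivatives

variable {H : ℝ → ℝ} {a b x t : ℝ}

lemma hasDerivAt_Phi_left (ha : HasDerivAt H a (x + t)) (hb : HasDerivAt H b (-x + t)) :
    HasDerivAt (fun s => Phi H (s, t)) ((a + b) / 2, (a - b) / 2) x := by
  have h₁ : HasDerivAt (fun s => H (s + t)) a x := by
    simpa [Function.comp_def] using ha.comp x ((hasDerivAt_id x).add_const t)
  have h₂ : HasDerivAt (fun s => H (-s + t)) (-b) x := by
    simpa [Function.comp_def] using hb.comp x ((hasDerivAt_id x).neg.add_const t)
  refine (((h₁.sub h₂).div_const 2).prodMk ((h₁.add h₂).div_const 2)).congr_deriv ?_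
  ring_nf

lemma hasDerivAt_Phi_right (ha : HasDerivAt H a (x + t)) (hb : HasDerivAt H b (-x + t)) :
    HasDerivAt (fun s => Phi H (x, s)) ((a - b) / 2, (a + b) / 2) t := by
  have h₁ : HasDerivAt (fun s => H (x + s)) a t := by
    simpa [Function.comp_def] using ha.comp t ((hasDerivAt_id t).const_add x)
  have h₂ : HasDerivAt (fun s => H (-x + s)) b t := by
    simpa [Function.comp_def] using hb.comp t ((hasDerivAt_id t).const_add (-x))
  exact ((h₁.sub h₂).div_const 2).prodMk ((h₁.add h₂).div_const 2)

end PhiDerivatives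

lemma energy_bounds {l L a b p q : ℝ} (hl : 0 ≤ l) (ha : a ∈ Set.Icc l L)
    (hb : b ∈ Set.Icc l L) :
    l ^ 2 * (p ^ 2 + q ^ 2) ≤
        ((a - b) / 2 * p + (a + b) / 2 * q) ^ 2 + ((a + b) / 2 * p + (a - b) / 2 * q) ^ 2 ∧
      ((a - b) / 2 * p + (a + b) / 2 * q) ^ 2 + ((a + b) / 2 * p + (a - b) / 2 * q) ^ 2 ≤
        L ^ 2 * (p ^ 2 + q ^ 2) := by
  have hsum : ((a - b) / 2 * p + (a + b) / 2 * q) ^ 2 + ((a + b) / 2 * p + (a - b) / 2 * q) ^ 2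
      = (a ^ 2 * (p + q) ^ 2 + b ^ 2 * (p - q) ^ 2) / 2 := by ring
  have hsplit (c : ℝ) :
      c ^ 2 * (p ^ 2 + q ^ 2) = (c ^ 2 * (p + q) ^ 2 + c ^ 2 * (p - q) ^ 2) / 2 := by ring
  have ha₁ : l ^ 2 ≤ a ^ 2 := pow_le_pow_left₀ hl ha.1 2
  have ha₂ : a ^ 2 ≤ L ^ 2 := pow_le_pow_left₀ (hl.trans ha.1) ha.2 2
  have hb₁ : l ^ 2 ≤ b ^ 2 := pow_le_pow_left₀ hl hb.1 2
  have hb₂ : b ^ 2 ≤ L ^ 2 := pow_le_pow_left₀ (hl.trans hb.1) hb.2 2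
  rw [hsum, hsplit l, hsplit L]
  constructor <;> gcongr

theorem stmt9_general (H : ℝ → ℝ) (hH : ContDiff ℝ 1 H) (lam1 lam2 : ℝ)
    (hlam1 : 0 < lam1)
    (hHd : ∀ s : ℝ, lam1 ≤ deriv H s ∧ deriv H s ≤ lam2)
    (V : ℝ × ℝ → ℝ) (hV : ContDiff ℝ 1 V)
    (u : ℝ × ℝ → ℝ) (hu : ∀ q : ℝ × ℝ, u q = V (Phi H q)) :
    ∀ x t : ℝ,
      lam1 ^ 2 * ((pdx V (Phi H (x, t))) ^ 2 + (pdt V (Phi H (x, t))) ^ 2) ≤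
        (pdt u (x, t)) ^ 2 + (pdx u (x, t)) ^ 2 ∧
      (pdt u (x, t)) ^ 2 + (pdx u (x, t)) ^ 2 ≤
        lam2 ^ 2 * ((pdx V (Phi H (x, t))) ^ 2 + (pdt V (Phi H (x, t))) ^ 2) := by
  intro x t
  obtain rfl : u = fun q => V (Phi H q) := funext hu
  have hH' (s : ℝ) : HasDerivAt H (deriv H s) s := (hH.differentiable one_ne_zero s).hasDerivAt
  have hV' := hV.differentiable one_ne_zero (Phi H (x, t))
  have hux : pdx (fun q => V (Phi H q)) (x, t) = _ :=
    ((hasDerivAt_Phi_left (hH' (x + t)) (hH' (-x + t))).comp_pdx_pdt hV').deriv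
  have hut : pdt (fun q => V (Phi H q)) (x, t) = _ :=
    ((hasDerivAt_Phi_right (hH' (x + t)) (hH' (-x + t))).comp_pdx_pdt hV').deriv
  rw [hux, hut]
  exact energy_bounds hlam1.le (hHd (x + t)) (hHd (-x + t))

/-- if `0 < λ1 ≤ H' ≤ λ2` then for `u = V ∘ Φ`, the energy density of `u` is
comparable to that of `V ∘ Φ`:
`λ1²·((V_ξ² + V_τ²) ∘ Φ) ≤ (∂u/∂t)² + (∂u/∂x)² ≤ λ2²·((V_ξ² + V_τ²) ∘ Φ)`. -/
theorem stmt9 (H : ℝ → ℝ) (hH : ContDiff ℝ 1 H) (lam1 lam2 : ℝ)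
    (hlam1 : 0 < lam1) (hlam12 : lam1 ≤ lam2)
    (hHd : ∀ s : ℝ, lam1 ≤ deriv H s ∧ deriv H s ≤ lam2)
    (V : ℝ × ℝ → ℝ) (hV : ContDiff ℝ 1 V)
    (u : ℝ × ℝ → ℝ) (hu : ∀ q : ℝ × ℝ, u q = V (Phi H q)) :
    ∀ x t : ℝ,
      lam1 ^ 2 * ((pdx V (Phi H (x, t))) ^ 2 + (pdt V (Phi H (x, t))) ^ 2) ≤
        (pdt u (x, t)) ^ 2 + (pdx u (x, t)) ^ 2 ∧
      (pdt u (x, t)) ^ 2 + (pdx u (x, t)) ^ 2 ≤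
        lam2 ^ 2 * ((pdx V (Phi H (x, t))) ^ 2 + (pdt V (Phi H (x, t))) ^ 2) :=
  stmt9_general H hH lam1 lam2 hlam1 hHd V hV u hu
end
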